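/- arXiv:1805.07515 — 7 statements merged into one kernel-verified Lean document; each statement's English description precedes it below -/
import Mathlib

section
/- The set A = [0,∞)^ω is not Haar-null in the Polish group ℝ^ω, yet A + A = A has empty interior in ℝ^ω. -/
open MeasureTheory Pointwise ENNReal

/-- A universally measurable set `A` in an Abelian Polish group is *Haar-null* if some Borel
probability measure vanishes on all translates `A + x = {y | y - x ∈ A}`. -/
def IsHaarNull {X : Type*} [TopologicalSpace X] [AddCommGroup X] [MeasurableSpace X]
    (A : Set X) : Prop :=
  ∃ μ : Measure X, IsProbabilityMeasure μ ∧ ∀ x : X, μ {y | y - x ∈ A} = 0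

lemma aux_AA : ({f : ℕ → ℝ | ∀ n, 0 ≤ f n} + {f : ℕ → ℝ | ∀ n, 0 ≤ f n}
      = {f : ℕ → ℝ | ∀ n, 0 ≤ f n}) := by
  ext f
  constructor
  · rintro ⟨g, hg, h, hh, rfl⟩
    intro n
    exact add_nonneg (hg n) (hh n)
  · intro hf
    exact ⟨f, hf, 0, fun n => le_refl 0, add_zero f⟩

lemma aux_int : interior {f : ℕ → ℝ | ∀ n, 0 ≤ f n} = ∅ := by
  rw [Set.eq_empty_iff_forall_notMem]
  intro f hf
  have hmem : interior {f : ℕ → ℝ | ∀ n, 0 ≤ f n} ∈ nhds f :=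
    isOpen_interior.mem_nhds hf
  have htend : Filter.Tendsto (fun k : ℕ => Function.update f k (-1))
      Filter.atTop (nhds f) := by
    rw [tendsto_pi_nhds]
    intro n
    refine Filter.Tendsto.congr' ?_ tendsto_const_nhds
    filter_upwards [Filter.eventually_gt_atTop n] with k hk
    exact (Function.update_of_ne (by omega : n ≠ k) _ _).symm
  obtain ⟨k, hk⟩ := (htend.eventually_mem hmem).exists
  have h1 : (0 : ℝ) ≤ Function.update f k (-1) k := interior_subset hk k
  rw [Function.update_self] at h1
  linarith

lemma aux_not_haar : ¬ IsHaarNull {f : ℕ → ℝ | ∀ n, 0 ≤ f n} := by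
  rintro ⟨μ, hμ, h⟩
  -- choose translates coordinatewise
  have key : ∀ n : ℕ, ∃ t : ℝ, μ {y : ℕ → ℝ | y n < t} ≤ (2 : ℝ≥0∞)⁻¹ ^ (n + 2) := by
    intro n
    have hmeas : ∀ k : ℕ, MeasurableSet {y : ℕ → ℝ | y n < -(k : ℝ)} :=
      fun k => (measurable_pi_apply n) measurableSet_Iio
    have hanti : Antitone (fun k : ℕ => {y : ℕ → ℝ | y n < -(k : ℝ)}) := by
      intro a b hab y hy
      simp only [Set.mem_setOf_eq] at *
      have : -(b : ℝ) ≤ -(a : ℝ) := by exact_mod_cast neg_le_neg (by exact_mod_cast hab)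
      linarith
    have hint : ⋂ k : ℕ, {y : ℕ → ℝ | y n < -(k : ℝ)} = ∅ := by
      rw [Set.eq_empty_iff_forall_notMem]
      intro y hy
      obtain ⟨k, hk⟩ := exists_nat_gt (-(y n))
      have := Set.mem_iInter.1 hy k
      simp only [Set.mem_setOf_eq] at this
      linarith
    have htend := tendsto_measure_iInter_atTop (fun k => (hmeas k).nullMeasurableSet)
      hanti ⟨0, measure_ne_top μ _⟩
    rw [hint, measure_empty] at htend
    have hpos : (0 : ℝ≥0∞) < (2 : ℝ≥0∞)⁻¹ ^ (n + 2) := by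
      exact ENNReal.pow_pos (by simp) _
    obtain ⟨k, hk⟩ := (htend.eventually (gt_mem_nhds hpos)).exists
    exact ⟨-(k : ℝ), le_of_lt hk⟩
  choose t ht using key
  have hx := h t
  have hcover : (Set.univ : Set (ℕ → ℝ)) ⊆
      {y : ℕ → ℝ | y - t ∈ {f : ℕ → ℝ | ∀ n, 0 ≤ f n}} ∪ ⋃ n, {y : ℕ → ℝ | y n < t n} := by
    intro y _
    by_cases hy : ∀ n, 0 ≤ (y - t) n
    · exact Or.inl hy
    · push_neg at hy
      obtain ⟨n, hn⟩ := hy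
      refine Or.inr (Set.mem_iUnion.2 ⟨n, ?_⟩)
      simp only [Set.mem_setOf_eq]
      simp only [Pi.sub_apply] at hn
      linarith
  have hsum : (∑' n : ℕ, μ {y : ℕ → ℝ | y n < t n}) ≤ 2⁻¹ := by
    calc (∑' n : ℕ, μ {y : ℕ → ℝ | y n < t n})
        ≤ ∑' n : ℕ, (2 : ℝ≥0∞)⁻¹ ^ (n + 2) := ENNReal.tsum_le_tsum ht
      _ = 2⁻¹ := by
          simp only [pow_add, ENNReal.tsum_mul_right, ENNReal.tsum_geometric,
            ENNReal.one_sub_inv_two, inv_inv, sq]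
          rw [← mul_assoc, ENNReal.mul_inv_cancel (by norm_num) (by norm_num), one_mul]
  have hbound : (1 : ℝ≥0∞) ≤ 2⁻¹ := by
    calc (1 : ℝ≥0∞) = μ Set.univ := measure_univ.symm
      _ ≤ μ ({y : ℕ → ℝ | y - t ∈ {f : ℕ → ℝ | ∀ n, 0 ≤ f n}}
            ∪ ⋃ n, {y : ℕ → ℝ | y n < t n}) := measure_mono hcover
      _ ≤ μ {y : ℕ → ℝ | y - t ∈ {f : ℕ → ℝ | ∀ n, 0 ≤ f n}}
            + μ (⋃ n, {y : ℕ → ℝ | y n < t n}) := measure_union_le _ _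
      _ ≤ 0 + ∑' n : ℕ, μ {y : ℕ → ℝ | y n < t n} := by
          exact add_le_add (le_of_eq hx) (measure_iUnion_le _)
      _ ≤ 2⁻¹ := by rw [zero_add]; exact hsum
  norm_num at hbound

/-- The set `A = [0,∞)^ω` is not Haar-null in `ℝ^ω`, yet `A + A = A` has empty interior. -/
theorem statement0 :
    ¬ IsHaarNull {f : ℕ → ℝ | ∀ n, 0 ≤ f n} ∧
    ({f : ℕ → ℝ | ∀ n, 0 ≤ f n} + {f : ℕ → ℝ | ∀ n, 0 ≤ f n}
      = {f : ℕ → ℝ | ∀ n, 0 ≤ f n}) ∧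
    interior ({f : ℕ → ℝ | ∀ n, 0 ≤ f n} + {f : ℕ → ℝ | ∀ n, 0 ≤ f n}) = ∅ := by
  refine ⟨aux_not_haar, aux_AA, ?_⟩
  rw [aux_AA, aux_int]
end

section
/- If A is a subset of an Abelian complete metric group X such that for every compact set K ⊆ X there exists x ∈ X with K ∩ (A+x) having non-empty interior in K, then A is Haar-open; i.e., for every non-empty compact K ⊆ X and every point p ∈ K there exists y ∈ X such that K ∩ (A+y) is a neighborhood of p in K. -/
open Topology

/-- A subset `A` of a topological Abelian group is *Haar-open* if for every compact `K` and every
`p ∈ K` there is `y` such that `K ∩ (A + y)` is a neighborhood of `p` in `K`, where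
`A + y = {z | z - y ∈ A}`. -/
def IsHaarOpen {X : Type*} [TopologicalSpace X] [AddCommGroup X] (A : Set X) : Prop :=
  ∀ K : Set X, IsCompact K → ∀ p ∈ K, ∃ y : X, K ∩ {z | z - y ∈ A} ∈ 𝓝[K] p

/-!
Fix a compact `K` and `p ∈ K`. Choose finite `2⁻ⁿ`-nets `Eₙ` of `K` and let `Fₙ` consist of the
differences of points of `Eₙ₊₁ ∪ {p}` and `Eₙ ∪ {p}` of norm at most `2¹⁻ⁿ`. Each `t ∈ K` with
`‖t - p‖ < 2⁻ᴺ` is then the sum of a telescoping series `t - p = ∑_{n ≥ N} wₙ` with `wₙ ∈ Fₙ`.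
The set `C` of all sums `∑ uₙ` with `uₙ ∈ Fₙ` is compact, as a continuous image of `∏ Fₙ`.
The hypothesis yields `x` and `u` such that `C ∩ (A + x)` is a neighbourhood of `∑ uₙ` in `C`;
by continuity it contains every sum whose first `N` terms are those of `u`, so
`K ∩ ball p 2⁻ᴺ ⊆ A + (x + p - ∑_{n < N} uₙ)`.
-/

open Metric Filter Set Pointwise

theorem exists_forall_lt_eq_imp_mem_of_mem_nhds {E : Type*} [TopologicalSpace E] {u : ℕ → E}
    {U : Set (ℕ → E)} (hU : U ∈ 𝓝 u) : ∃ N, ∀ v : ℕ → E, (∀ n < N, v n = u n) → v ∈ U := by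
  rw [nhds_pi, Filter.mem_pi] at hU
  obtain ⟨I, hI, t, ht, hIt⟩ := hU
  obtain ⟨N, hN⟩ := hI.bddAbove
  refine ⟨N + 1, fun v hv => hIt fun i hi => ?_⟩
  rw [hv i (Nat.lt_succ_of_le (hN hi))]
  exact mem_of_mem_nhds (ht i)

theorem HasSum.ite_lt {M : Type*} [AddCommMonoid M] [TopologicalSpace M] [ContinuousAdd M]
    {w : ℕ → M} {s : M} (hw : HasSum w s) (u : ℕ → M) {N : ℕ} (hw0 : ∀ n < N, w n = 0) :
    HasSum (fun n => if n < N then u n else w n) (∑ n ∈ Finset.range N, u n + s) := by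
  have hhead : HasSum (fun n => if n < N then u n else 0)
      (∑ n ∈ Finset.range N, if n < N then u n else 0) :=
    hasSum_sum_of_ne_finset_zero fun n hn => by simp_all
  rw [Finset.sum_congr rfl fun n hn => if_pos (Finset.mem_range.1 hn)] at hhead
  convert hhead.add hw using 1
  funext n
  by_cases hn : n < N <;> simp [hn, hw0]

section NormedAddCommGroup

variable {X : Type*} [NormedAddCommGroup X]

theorem continuousOn_tsum_pi [CompleteSpace X] {F : ℕ → Set X} {r : ℕ → ℝ} (hr : Summable r)
    (hFr : ∀ n, F n ⊆ closedBall 0 (r n)) :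
    ContinuousOn (fun u : ℕ → X => ∑' n, u n) (univ.pi F) :=
  continuousOn_tsum (fun n => (continuous_apply n).continuousOn) hr fun n _ hu =>
    mem_closedBall_zero_iff.1 (hFr n (hu n trivial))

theorem IsCompact.exists_finite_tail_hasSum {K : Set X} (hK : IsCompact K) (p : X) :
    ∃ F : ℕ → Set X, (∀ n, (F n).Finite ∧ F n ⊆ closedBall 0 (2 * (1 / 2) ^ n)) ∧
      ∀ N, ∀ t ∈ K ∩ ball p ((1 / 2) ^ N), ∃ w : ℕ → X,
        (∀ n, w n ∈ F n) ∧ (∀ n < N, w n = 0) ∧ HasSum w (t - p) := by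
  choose E _ hE hKE using fun n : ℕ =>
    finite_cover_balls_of_compact hK (pow_pos (by norm_num : (0 : ℝ) < 1 / 2) n)
  refine ⟨fun n => (insert p (E (n + 1)) - insert p (E n)) ∩ closedBall 0 (2 * (1 / 2) ^ n),
    fun n => ⟨(((hE _).insert p).sub ((hE n).insert p)).inter_of_left _, inter_subset_right⟩, ?_⟩
  rintro N t ⟨htK, htp⟩
  have : ∀ n, ∃ e ∈ E n, dist t e < (1 / 2) ^ n := fun n => by
    simpa only [mem_iUnion₂, mem_ball, exists_prop] using hKE n htK
  choose e heE hte using this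
  -- `a` stays at `p` up to `N` and then follows the nets to `t`, so its increments sum to `t - p`
  set a : ℕ → X := fun n => if n ≤ N then p else e n
  have ha_mem : ∀ n, a n ∈ insert p (E n) := fun n => by
    by_cases hn : n ≤ N
    · simp [a, hn]
    · simp [a, hn, heE n]
  have ha_dist : ∀ n, N ≤ n → dist (a n) t < (1 / 2) ^ n := fun n hn => by
    rcases hn.eq_or_lt with rfl | hn
    · simpa [a, dist_comm] using htp
    · simpa [a, hn.not_ge, dist_comm] using hte n
  have hw_norm : ∀ n, ‖a (n + 1) - a n‖ ≤ 2 * (1 / 2) ^ n := fun n => by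
    by_cases hn : N ≤ n
    · rw [← dist_eq_norm]
      calc dist (a (n + 1)) (a n) ≤ dist (a (n + 1)) t + dist (a n) t := dist_triangle_right _ _ _
        _ ≤ (1 / 2) ^ (n + 1) + (1 / 2) ^ n :=
          add_le_add (ha_dist _ (by omega)).le (ha_dist n hn).le
        _ ≤ 2 * (1 / 2) ^ n := by
          rw [pow_succ]; linarith [pow_nonneg (by norm_num : (0 : ℝ) ≤ 1 / 2) n]
    · simp [a, show n + 1 ≤ N by omega, show n ≤ N by omega]
  refine ⟨fun n => a (n + 1) - a n, fun n => ⟨sub_mem_sub (ha_mem _) (ha_mem n),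
    mem_closedBall_zero_iff.2 (hw_norm n)⟩,
    fun n hn => by simp [a, show n + 1 ≤ N by omega, hn.le], ?_⟩
  rw [hasSum_iff_tendsto_nat_of_summable_norm
    (((summable_geometric_two).mul_left 2).of_nonneg_of_le (fun _ => norm_nonneg _) hw_norm)]
  simp only [Finset.sum_range_sub, show a 0 = p by simp [a]]
  refine Tendsto.sub_const ?_ p
  rw [tendsto_iff_dist_tendsto_zero]
  refine squeeze_zero' (Eventually.of_forall fun _ => dist_nonneg) ?_
    (tendsto_pow_atTop_nhds_zero_of_lt_one (by norm_num : (0 : ℝ) ≤ 1 / 2) (by norm_num))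
  filter_upwards [eventually_ge_atTop N] with n hn using (ha_dist n hn).le

theorem isHaarOpen_of_forall_isCompact_exists_mem_nhdsWithin [CompleteSpace X] {A : Set X}
    (h : ∀ K : Set X, IsCompact K → ∃ x : X, ∃ z ∈ K, K ∩ {w | w - x ∈ A} ∈ 𝓝[K] z) :
    IsHaarOpen A := by
  intro K hK p _
  obtain ⟨F, hF, hrep⟩ := hK.exists_finite_tail_hasSum p
  set P : Set (ℕ → X) := univ.pi F
  set Φ : (ℕ → X) → X := fun u => ∑' n, u n
  have hΦ : ContinuousOn Φ P :=
    continuousOn_tsum_pi ((summable_geometric_two).mul_left 2) fun n => (hF n).2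
  obtain ⟨x, _, ⟨u, hu, rfl⟩, hux⟩ :=
    h _ ((isCompact_univ_pi fun n => (hF n).1.isCompact).image_of_continuousOn hΦ)
  obtain ⟨U, hU, hUP⟩ := mem_nhdsWithin_iff_exists_mem_nhds_inter.1
    ((hΦ u hu).tendsto_nhdsWithin (mapsTo_image Φ P) hux)
  obtain ⟨N, hN⟩ := exists_forall_lt_eq_imp_mem_of_mem_nhds hU
  refine ⟨x + p - ∑ n ∈ Finset.range N, u n, mem_of_superset
    (inter_mem_nhdsWithin K (ball_mem_nhds p (pow_pos (by norm_num : (0 : ℝ) < 1 / 2) N))) ?_⟩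
  rintro t ht
  obtain ⟨w, hwF, hw0, hw⟩ := hrep N t ht
  set v : ℕ → X := fun n => if n < N then u n else w n
  have hvP : v ∈ P := fun n _ => by
    by_cases hn : n < N
    · simpa [v, hn] using hu n trivial
    · simpa [v, hn] using hwF n
  have hv : HasSum v (∑ n ∈ Finset.range N, u n + (t - p)) := hw.ite_lt u hw0
  refine ⟨ht.1, ?_⟩
  have hvA : (∑' n, v n) - x ∈ A := (hUP ⟨hN v fun n hn => by simp [v, hn], hvP⟩).2
  rw [hv.tsum_eq] at hvA
  change t - _ ∈ A
  convert hvA using 1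
  abel

end NormedAddCommGroup

theorem statement1_general {X : Type*} [MetricSpace X] [CompleteSpace X] [AddCommGroup X]
    (hinv : ∀ x y z : X, dist (x + z) (y + z) = dist x y)
    (A : Set X)
    (h : ∀ K : Set X, IsCompact K →
      ∃ x : X, ∃ z ∈ K, K ∩ {w | w - x ∈ A} ∈ 𝓝[K] z) :
    IsHaarOpen A := by
  let : Norm X := ⟨fun x => dist 0 x⟩
  let : NormedAddCommGroup X := NormedAddCommGroup.ofAddDist' (fun _ => rfl) fun x y z => by
    rw [add_comm z x, add_comm z y, hinv]
  exact isHaarOpen_of_forall_isCompact_exists_mem_nhdsWithin h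

/-- If in an Abelian group with a complete invariant metric, for every compact `K` some translate
of `A` meets `K` in a set with non-empty interior in `K`, then `A` is Haar-open. -/
theorem statement1 {X : Type*} [MetricSpace X] [CompleteSpace X] [AddCommGroup X]
    [IsTopologicalAddGroup X]
    (hinv : ∀ x y z : X, dist (x + z) (y + z) = dist x y)
    (A : Set X)
    (h : ∀ K : Set X, IsCompact K →
      ∃ x : X, ∃ z ∈ K, K ∩ {w | w - x ∈ A} ∈ 𝓝[K] z) :
    IsHaarOpen A :=
  statement1_general hinv A h
end

section
/- A subset of a locally compact Abelian topological group is Haar-open if and only if it has non-empty interior. -/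
open Topology

section HaarOpen

variable {X : Type*} [TopologicalSpace X] [AddCommGroup X] [IsTopologicalAddGroup X]

theorem setOf_sub_mem_mem_nhds_iff {A : Set X} {x y : X} :
    {z | z - y ∈ A} ∈ 𝓝 x ↔ A ∈ 𝓝 (x - y) :=
  (Homeomorph.subRight y).map_nhds_eq x ▸ Iff.rfl

theorem IsHaarOpen.interior_nonempty [LocallyCompactSpace X] {A : Set X} (hA : IsHaarOpen A) :
    (interior A).Nonempty := by
  obtain ⟨K, hK, hK0⟩ := exists_compact_mem_nhds (0 : X)
  obtain ⟨y, hy⟩ := hA K hK 0 (mem_of_mem_nhds hK0)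
  rw [nhdsWithin_eq_nhds.2 hK0] at hy
  have hA0 : {z | z - y ∈ A} ∈ 𝓝 0 := Filter.mem_of_superset hy Set.inter_subset_right
  exact ⟨0 - y, mem_interior_iff_mem_nhds.2 (setOf_sub_mem_mem_nhds_iff.1 hA0)⟩

theorem isHaarOpen_of_interior_nonempty {A : Set X} (hA : (interior A).Nonempty) :
    IsHaarOpen A := by
  obtain ⟨u, hu⟩ := hA
  intro K _ p _
  refine ⟨p - u, Filter.inter_mem self_mem_nhdsWithin (mem_nhdsWithin_of_mem_nhds ?_)⟩
  rw [setOf_sub_mem_mem_nhds_iff, sub_sub_cancel]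
  exact mem_interior_iff_mem_nhds.1 hu

end HaarOpen

theorem statement2_general {X : Type*} [TopologicalSpace X] [AddCommGroup X] [IsTopologicalAddGroup X]
    [LocallyCompactSpace X] (A : Set X) :
    IsHaarOpen A ↔ (interior A).Nonempty :=
  ⟨IsHaarOpen.interior_nonempty, isHaarOpen_of_interior_nonempty⟩

/-- A subset of a locally compact Abelian topological group is Haar-open iff it has
non-empty interior. -/
theorem statement2 {X : Type*} [TopologicalSpace X] [AddCommGroup X] [IsTopologicalAddGroup X]
    [LocallyCompactSpace X] [T2Space X] (A : Set X) :
    IsHaarOpen A ↔ (interior A).Nonempty :=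
  statement2_general A
end

section
/- Let X be an Abelian topological group such that for every compact set K ⊆ X there exists a locally K-invariant Steinhaus-like Radon probability measure on X. If A and B are universally measurable subsets of X that are not Haar-null, then the set A − B = {a − b : a ∈ A, b ∈ B} is Haar-open in X. -/
open MeasureTheory Topology

/-- Universally measurable set: null-measurable with respect to every Borel probability
measure. -/
def UniversallyMeasurable {X : Type*} [MeasurableSpace X] (A : Set X) : Prop :=
  ∀ μ : Measure X, IsProbabilityMeasure μ → NullMeasurableSet A μ

/-- Steinhaus-like measure: symmetric, and any two sets of positive measure have translates
with intersection of positive measure. -/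
def SteinhausLike {X : Type*} [AddCommGroup X] [MeasurableSpace X] (μ : Measure X) : Prop :=
  (∀ B : Set X, MeasurableSet B → μ (-B) = μ B) ∧
  ∀ A B : Set X, MeasurableSet A → MeasurableSet B → 0 < μ A → 0 < μ B →
    ∃ a b : X, 0 < μ ({y | y - a ∈ A} ∩ {y | y - b ∈ B})

/-- Locally `K`-invariant measure. -/
def LocallyInvariant {X : Type*} [TopologicalSpace X] [AddCommGroup X] [MeasurableSpace X]
    (μ : Measure X) (K : Set X) : Prop :=
  ∃ M : ℕ → Set X, (∀ n, MeasurableSet (M n)) ∧ Monotone M ∧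
    Filter.Tendsto (fun n => μ (M n)) Filter.atTop (𝓝 1) ∧
    ∀ n : ℕ, ∃ U ∈ 𝓝 (0 : X), ∀ B ⊆ M n, MeasurableSet B →
      ∀ x ∈ U ∩ K, μ {y | y - x ∈ B} = μ B

/-!
Steinhaus–Weil argument. Given a compact `K` and `p ∈ K`, take the measure `μ` for the compact
set `K - p` of small translations. Since `A` and `B` are not Haar-null, some translates of them
have `μ`-positive measurable cores, and the Steinhaus-like property moves these cores onto a
common set `E` of positive measure, `E ⊆ A + α`, `E ⊆ B + β`. Local invariance lets us shrink
`E` to `F` on which `μ` is invariant under translations by `t ∈ U ∩ (K - p)`. Approximating `F`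
by a compact `C` from inside and `C` by an open `O` from outside with `μ O < 2 μ C`, the sets
`F ∩ (C + W)` and `F ∩ (C + W) + t` both lie in `O` for small `t`, so they meet. A point `w` of
the intersection gives `t + β - α = (w - α) - (w - t - β) ∈ A - B`.
-/

open Pointwise

section

variable {X : Type*} [TopologicalSpace X] [AddCommGroup X] [MeasurableSpace X]

theorem UniversallyMeasurable.nullMeasurableSet_translate {Y : Type*} [AddGroup Y]
    [MeasurableSpace Y] [MeasurableSub Y] {S : Set Y} (hS : UniversallyMeasurable S)
    (μ : Measure Y) [IsProbabilityMeasure μ] (c : Y) :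
    NullMeasurableSet {y | y - c ∈ S} μ :=
  (hS _ (Measure.isProbabilityMeasure_map (measurable_sub_const c).aemeasurable)).preimage
    ⟨measurable_sub_const c, Measure.AbsolutelyContinuous.rfl⟩

theorem exists_measurableSet_measure_pos_subset_translate [MeasurableSub X] {A : Set X}
    (hA : UniversallyMeasurable A) (hAn : ¬ IsHaarNull A) (μ : Measure X)
    [IsProbabilityMeasure μ] :
    ∃ a : X, ∃ D, MeasurableSet D ∧ 0 < μ D ∧ D ⊆ {y | y - a ∈ A} := by
  obtain ⟨a, ha⟩ : ∃ a, μ {y | y - a ∈ A} ≠ 0 := by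
    by_contra! h
    exact hAn ⟨μ, inferInstance, h⟩
  obtain ⟨D, hDA, hD, hDae⟩ := (hA.nullMeasurableSet_translate μ a).exists_measurable_subset_ae_eq
  exact ⟨a, D, hD, pos_iff_ne_zero.2 (by rwa [measure_congr hDae]), hDA⟩

theorem SteinhausLike.exists_measurableSet_subset_translates [MeasurableSub X] {μ : Measure X}
    [IsProbabilityMeasure μ] (hμ : SteinhausLike μ) {A B : Set X}
    (hA : UniversallyMeasurable A) (hB : UniversallyMeasurable B)
    (hAn : ¬ IsHaarNull A) (hBn : ¬ IsHaarNull B) :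
    ∃ α β : X, ∃ E, MeasurableSet E ∧ 0 < μ E ∧
      E ⊆ {y | y - α ∈ A} ∧ E ⊆ {y | y - β ∈ B} := by
  obtain ⟨a₀, DA, hDA, hμDA, hDAA⟩ := exists_measurableSet_measure_pos_subset_translate hA hAn μ
  obtain ⟨b₀, DB, hDB, hμDB, hDBB⟩ := exists_measurableSet_measure_pos_subset_translate hB hBn μ
  obtain ⟨a, b, hab⟩ := hμ.2 DA DB hDA hDB hμDA hμDB
  refine ⟨a + a₀, b + b₀, _, (hDA.preimage (measurable_sub_const a)).inter
    (hDB.preimage (measurable_sub_const b)), hab, fun y hy => ?_, fun y hy => ?_⟩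
  · simpa only [Set.mem_ofPred_eq, sub_sub] using hDAA hy.1
  · simpa only [Set.mem_ofPred_eq, sub_sub] using hDBB hy.2

theorem LocallyInvariant.exists_subset_measure_pos {μ : Measure X} [IsProbabilityMeasure μ]
    {K E : Set X} (h : LocallyInvariant μ K) (hE : MeasurableSet E) (hμE : 0 < μ E) :
    ∃ F ⊆ E, MeasurableSet F ∧ 0 < μ F ∧ ∃ U ∈ 𝓝 (0 : X),
      ∀ B ⊆ F, MeasurableSet B → ∀ t ∈ U ∩ K, μ {y | y - t ∈ B} = μ B := by
  obtain ⟨M, hM, hMmono, hMlim, hMinv⟩ := h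
  have hμM : μ (⋃ n, M n) = 1 :=
    tendsto_nhds_unique (tendsto_measure_iUnion_atTop hMmono) hMlim
  have hμEM : μ (⋃ n, E ∩ M n) = μ E := by
    rw [← Set.inter_iUnion]
    exact measure_inter_conull (by rw [prob_compl_eq_one_sub (.iUnion hM), hμM, tsub_self])
  obtain ⟨n, hn⟩ := exists_measure_pos_of_not_measure_iUnion_null (hμEM ▸ hμE.ne')
  obtain ⟨U, hU, hUinv⟩ := hMinv n
  exact ⟨E ∩ M n, Set.inter_subset_left, hE.inter (hM n), hn, U, hU,
    fun B hB => hUinv B (hB.trans Set.inter_subset_right)⟩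

section TopologicalAddGroup

variable [IsTopologicalAddGroup X] [BorelSpace X]

/-- Steinhaus' theorem for a measure that is invariant on subsets of `F` under the
translations in `T`. -/
theorem exists_nhds_zero_forall_sub_mem_of_measure_translate_eq {μ : Measure X}
    [IsFiniteMeasure μ] [μ.OuterRegular] [μ.InnerRegular] {F T : Set X}
    (hF : MeasurableSet F) (hμF : 0 < μ F)
    (hinv : ∀ B ⊆ F, MeasurableSet B → ∀ t ∈ T, μ {y | y - t ∈ B} = μ B) :
    ∃ W ∈ 𝓝 (0 : X), ∀ t ∈ W ∩ T, ∃ w ∈ F, w - t ∈ F := by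
  obtain ⟨C, hCF, hC, hμC⟩ := hF.exists_lt_isCompact hμF
  obtain ⟨O, hCO, hO, hμO⟩ := Set.exists_isOpen_lt_of_lt C (μ C + μ C)
    (ENNReal.lt_add_right (measure_ne_top μ C) hμC.ne')
  obtain ⟨V, hV, hCV⟩ := compact_open_separated_add_right hC hO hCO
  obtain ⟨W, hW, hW0, hWV⟩ := exists_open_nhds_zero_add_subset hV
  refine ⟨W, hW.mem_nhds hW0, fun t ⟨htW, htT⟩ => ?_⟩
  set D := F ∩ (C + W)
  have hD : MeasurableSet D := hF.inter hW.add_left.measurableSet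
  have hCD : C ⊆ D := fun c hc => ⟨hCF hc, c, hc, 0, hW0, add_zero c⟩
  have hDO : D ⊆ O := by
    rintro _ ⟨-, c, hc, w, hw, rfl⟩
    exact hCV (Set.add_mem_add hc (add_zero w ▸ hWV (Set.add_mem_add hw hW0)))
  have hDtO : {y | y - t ∈ D} ⊆ O := by
    rintro y ⟨-, c, hc, w, hw, hy⟩
    rw [← sub_add_cancel y t, ← hy, add_assoc]
    exact hCV (Set.add_mem_add hc (hWV (Set.add_mem_add hw htW)))
  have hμO' : μ O < μ D + μ {y | y - t ∈ D} := by
    rw [hinv D Set.inter_subset_left hD t htT]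
    exact hμO.trans_le (add_le_add (measure_mono hCD) (measure_mono hCD))
  obtain ⟨w, hwD, hwtD⟩ :=
    nonempty_inter_of_measure_lt_add μ (hD.preimage (measurable_sub_const t)) hDO hDtO hμO'
  exact ⟨w, hwD.1, hwtD.1⟩

theorem exists_nhds_zero_forall_sub_mem_sub {μ : Measure X} [IsProbabilityMeasure μ]
    [μ.OuterRegular] [μ.InnerRegular] {K : Set X} (hSt : SteinhausLike μ)
    (hinv : LocallyInvariant μ K) {A B : Set X}
    (hA : UniversallyMeasurable A) (hB : UniversallyMeasurable B)
    (hAn : ¬ IsHaarNull A) (hBn : ¬ IsHaarNull B) :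
    ∃ y : X, ∃ W ∈ 𝓝 (0 : X), ∀ t ∈ W ∩ K, t - y ∈ A - B := by
  obtain ⟨α, β, E, hE, hμE, hEA, hEB⟩ :=
    hSt.exists_measurableSet_subset_translates hA hB hAn hBn
  obtain ⟨F, hFE, hF, hμF, U, hU, hFinv⟩ := hinv.exists_subset_measure_pos hE hμE
  obtain ⟨W, hW, hWF⟩ := exists_nhds_zero_forall_sub_mem_of_measure_translate_eq hF hμF hFinv
  refine ⟨α - β, W ∩ U, Filter.inter_mem hW hU, fun t ⟨⟨htW, htU⟩, htK⟩ => ?_⟩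
  obtain ⟨w, hw, hwt⟩ := hWF t ⟨htW, htU, htK⟩
  exact ⟨w - α, hEA (hFE hw), w - t - β, hEB (hFE hwt), by beta_reduce; abel⟩

end TopologicalAddGroup

end

open Pointwise in
/-- If every compact `K ⊆ X` admits a locally `K`-invariant Steinhaus-like Radon probability
measure and `A, B` are universally measurable non-Haar-null sets, then `A - B` is Haar-open. -/
theorem statement4 {X : Type*} [TopologicalSpace X] [AddCommGroup X] [IsTopologicalAddGroup X]
    [MeasurableSpace X] [BorelSpace X]
    (hX : ∀ K : Set X, IsCompact K → ∃ μ : Measure X,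
      IsProbabilityMeasure μ ∧ μ.Regular ∧ μ.InnerRegular ∧ SteinhausLike μ ∧
        LocallyInvariant μ K)
    (A B : Set X) (hA : UniversallyMeasurable A) (hB : UniversallyMeasurable B)
    (hAn : ¬ IsHaarNull A) (hBn : ¬ IsHaarNull B) :
    IsHaarOpen (A - B) := by
  intro K hK p _
  obtain ⟨μ, hprob, hreg, hinner, hSt, hinv⟩ :=
    hX ((· - p) '' K) (hK.image (continuous_sub_right p))
  obtain ⟨y, W, hW, hWAB⟩ := exists_nhds_zero_forall_sub_mem_sub hSt hinv hA hB hAn hBn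
  have hpW : {x | x - p ∈ W} ∈ 𝓝 p :=
    (continuous_sub_right p).continuousAt.preimage_mem_nhds (by rwa [sub_self])
  refine ⟨p + y, ?_⟩
  filter_upwards [self_mem_nhdsWithin, mem_nhdsWithin_of_mem_nhds hpW] with x hxK hxW
  refine ⟨hxK, ?_⟩
  simpa only [Set.mem_ofPred_eq, sub_sub] using hWAB (x - p) ⟨hxW, x, hxK, rfl⟩
end

section
/- Let λ' and μ' be probability measures on spaces Y and Z respectively, let A ⊆ Y × Z be measurable with μ := (λ' ⊗ μ')(A) > 0, and suppose A' ⊆ Y is a measurable set containing the projection of A to Y with λ'(A') < (6/5)·μ. Let A_y := {x ∈ Y : (x,y) ∈ A}. Then the set L_A := {y ∈ Z : λ'(A_y) > (1/3)·λ'(A')} satisfies μ'(L_A) > 3/4. -/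
open MeasureTheory

/-- If `A ⊆ Y × Z` has positive product measure `m`, and `A'` contains the projection of `A`
with `λ' A' < (6/5) m`, then the set of `y` whose section has measure `> (1/3) λ' A'` has
`μ'`-measure greater than `3/4`. -/
theorem statement8 {Y Z : Type*} [MeasurableSpace Y] [MeasurableSpace Z]
    (lam : Measure Y) (mu : Measure Z) [IsProbabilityMeasure lam] [IsProbabilityMeasure mu]
    (A : Set (Y × Z)) (hA : MeasurableSet A)
    (hpos : 0 < (lam.prod mu) A)
    (A' : Set Y) (hA' : MeasurableSet A') (hproj : Prod.fst '' A ⊆ A')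
    (hbound : lam A' < (6 / 5 : ENNReal) * (lam.prod mu) A) :
    (3 / 4 : ENNReal) < mu {y : Z | (1 / 3 : ENNReal) * lam A' < lam {x : Y | (x, y) ∈ A}} := by
  set m := (lam.prod mu) A with hm
  set f : Z → ENNReal := fun y => lam {x : Y | (x, y) ∈ A} with hf
  have hfmeas : Measurable f := measurable_measure_prodMk_right hA
  have hsec : ∀ y, f y ≤ lam A' := fun y =>
    measure_mono (fun x hx => hproj ⟨(x, y), hx, rfl⟩)
  have hFub : m = ∫⁻ y, f y ∂mu := Measure.prod_apply_symm hA
  set L := {y : Z | (1 / 3 : ENNReal) * lam A' < f y} with hL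
  have hLmeas : MeasurableSet L := measurableSet_lt measurable_const hfmeas
  by_contra hcon
  push_neg at hcon
  set b : ENNReal := (1 / 3 : ENNReal) * lam A' with hb
  have hbfin : b ≠ ⊤ := by
    rw [hb]
    exact ENNReal.mul_ne_top (by norm_num) (measure_ne_top lam A')
  have h3b : lam A' = 3 * b := by
    rw [hb, ← mul_assoc]
    norm_num
    rw [ENNReal.mul_inv_cancel (by norm_num) (by norm_num), one_mul]
  have hsplit : m ≤ 3 * b * mu L + b * mu Lᶜ := by
    rw [hFub, ← lintegral_add_compl f hLmeas]
    gcongr ?_ + ?_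
    · calc ∫⁻ y in L, f y ∂mu ≤ ∫⁻ _ in L, lam A' ∂mu :=
            setLIntegral_mono' hLmeas (fun y _ => hsec y)
        _ = 3 * b * mu L := by rw [setLIntegral_const, h3b]
    · calc ∫⁻ y in Lᶜ, f y ∂mu ≤ ∫⁻ _ in Lᶜ, b ∂mu :=
            setLIntegral_mono' hLmeas.compl (fun y hy => not_lt.mp hy)
        _ = b * mu Lᶜ := setLIntegral_const _ _
  have hsum : mu L + mu Lᶜ = 1 := by
    rw [measure_add_measure_compl hLmeas, measure_univ]
  have hsplit2 : m ≤ 2 * b * (3 / 4) + b := by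
    calc m ≤ 3 * b * mu L + b * mu Lᶜ := hsplit
      _ = 2 * b * mu L + b * (mu L + mu Lᶜ) := by ring
      _ = 2 * b * mu L + b := by rw [hsum, mul_one]
      _ ≤ 2 * b * (3 / 4) + b := by gcongr
  have hbound' : 3 * b < (6 / 5 : ENNReal) * m := by rw [← h3b]; exact hbound
  have hfin : m ≠ ⊤ := measure_ne_top _ _
  -- pass to real numbers
  clear_value b
  have h34 : (3 / 4 : ENNReal) ≠ ⊤ := (ENNReal.div_lt_top (by norm_num) (by norm_num)).ne
  have h65 : (6 / 5 : ENNReal) ≠ ⊤ := (ENNReal.div_lt_top (by norm_num) (by norm_num)).ne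
  have h2b : 2 * b * (3 / 4) ≠ ⊤ :=
    ENNReal.mul_ne_top (ENNReal.mul_ne_top (by norm_num) hbfin) h34
  have hM : m.toReal ≤ 2 * b.toReal * (3 / 4) + b.toReal := by
    have := ENNReal.toReal_mono (ENNReal.add_ne_top.mpr ⟨h2b, hbfin⟩) hsplit2
    rw [ENNReal.toReal_add h2b hbfin] at this
    simpa only [ENNReal.toReal_mul, ENNReal.toReal_div, ENNReal.toReal_ofNat] using this
  have hB : 3 * b.toReal < 6 / 5 * m.toReal := by
    have := ENNReal.toReal_strict_mono (ENNReal.mul_ne_top h65 hfin) hbound'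
    simpa only [ENNReal.toReal_mul, ENNReal.toReal_div, ENNReal.toReal_ofNat] using this
  have hMpos : 0 < m.toReal := ENNReal.toReal_pos hpos.ne' hfin
  linarith
end

section
/- Let X be an Abelian Polish group and A a universally measurable subset of X that is not Haar-null. Then the difference set A − A = {a − b : a, b ∈ A} is a neighborhood of zero in X. -/
/-!
Suppose `A - A` is not a neighbourhood of `0`. Then one can pick `xₙ ∉ A - A` converging to `0`
so fast that `S ε = ∑ εₙ xₙ` converges for every `ε` in the Cantor group `ℕ → ZMod 2` and
defines a continuous map; `μ = S_* ν`, with `ν` the Haar probability measure, witnesses that `A`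
is Haar-null. Indeed, if some translate `A + t` had positive `μ`-measure, then
`E = S⁻¹(A + t)` would have positive `ν`-measure, so by Steinhaus' theorem `E - E` would contain
a basis vector `e_N`. Flipping the `N`-th coordinate of a point of `E` changes `S` by `± x_N`,
whence `x_N ∈ (A + t) - (A + t) = A - A`, a contradiction.
-/

open MeasureTheory Topology Pointwise Filter Set

theorem UniversallyMeasurable.preimage {X Y : Type*} [MeasurableSpace X] [MeasurableSpace Y]
    {A : Set X} (hA : UniversallyMeasurable A) {f : Y → X} (hf : Measurable f) :
    UniversallyMeasurable (f ⁻¹' A) := fun μ _ =>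
  (hA _ (Measure.isProbabilityMeasure_map hf.aemeasurable)).preimage (hf.quasiMeasurePreserving μ)

theorem exists_seq_forall_mem_of_nonempty {X : Type*} (U : ∀ n, (Fin n → X) → Set X)
    (hU : ∀ n v, (U n v).Nonempty) : ∃ x : ℕ → X, ∀ n, x n ∈ U n fun i => x i := by
  choose g hg using hU
  refine ⟨fun n => Nat.strongRec (motive := fun _ => X) (fun n x => g n fun i => x i i.isLt) n,
    fun n => ?_⟩
  dsimp only
  rw [Nat.strongRec_eq]
  exact hg n _

theorem tendsto_pi_single_atTop_nhds_zero {M : Type*} [TopologicalSpace M] [Zero M] (c : M) :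
    Tendsto (fun n : ℕ => (Pi.single n c : ℕ → M)) atTop (𝓝 0) :=
  tendsto_pi_nhds.2 fun i => tendsto_const_nhds.congr' <|
    (eventually_gt_atTop i).mono fun _ hn => by simp [Pi.single_eq_of_ne hn.ne]

theorem ContinuousMap.exists_tendsto_of_dist_succ_le_geometric {K X : Type*}
    [TopologicalSpace K] [CompactSpace K] [PseudoMetricSpace X] [CompleteSpace X]
    (F : ℕ → C(K, X)) (hF : ∀ n k, dist (F n k) (F (n + 1) k) ≤ (1 / 2) ^ n) :
    ∃ S : C(K, X), ∀ k, Tendsto (fun n => F n k) atTop (𝓝 (S k)) := by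
  have hdist : ∀ n, dist (F n) (F (n + 1)) ≤ 1 * (1 / 2) ^ n := fun n => by
    rw [one_mul]
    exact (ContinuousMap.dist_le (by positivity)).2 (hF n)
  obtain ⟨S, hS⟩ :=
    cauchySeq_tendsto_of_complete (cauchySeq_of_le_geometric _ _ one_half_lt_one hdist)
  exact ⟨S, fun k => ((continuous_eval_const k).tendsto S).comp hS⟩

theorem MeasureTheory.Measure.eventually_exists_add_mem_of_tendsto_zero {G : Type*} [AddGroup G]
    [TopologicalSpace G] [IsTopologicalAddGroup G] [LocallyCompactSpace G] [MeasurableSpace G]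
    [BorelSpace G] (μ : Measure G) [μ.IsAddHaarMeasure] [μ.InnerRegular] {E : Set G}
    (hE : NullMeasurableSet E μ) (hE0 : μ E ≠ 0) {u : ℕ → G}
    (hu : Tendsto u atTop (𝓝 0)) : ∀ᶠ n in atTop, ∃ a ∈ E, u n + a ∈ E := by
  obtain ⟨E', hE'E, hE', hE'ae⟩ := hE.exists_measurable_subset_ae_eq
  have hE'0 : 0 < μ E' := pos_iff_ne_zero.2 (by rwa [measure_congr hE'ae])
  filter_upwards [hu (Measure.sub_mem_nhds_zero_of_addHaar_pos μ E' hE' hE'0)]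
    with n ⟨b, hb, a, ha, hba⟩
  exact ⟨a, hE'E ha, by rw [← hba, sub_add_cancel]; exact hE'E hb⟩

theorem exists_mem_update_one_mem (μ : Measure (ℕ → ZMod 2)) [μ.IsAddHaarMeasure]
    [μ.InnerRegular] {E : Set (ℕ → ZMod 2)} (hE : NullMeasurableSet E μ) (hE0 : μ E ≠ 0) :
    ∃ ε ∈ E, ∃ N, ε N = 0 ∧ Function.update ε N 1 ∈ E := by
  obtain ⟨N, a, ha, ha'⟩ := (Measure.eventually_exists_add_mem_of_tendsto_zero μ hE hE0
    (tendsto_pi_single_atTop_nhds_zero 1)).exists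
  have hoff : ∀ i ≠ N, (Pi.single N 1 + a : ℕ → ZMod 2) i = a i := fun i hi => by
    rw [Pi.add_apply, Pi.single_eq_of_ne hi, zero_add]
  rcases (by decide : ∀ z : ZMod 2, z = 0 ∨ z = 1) (a N) with haN | haN
  · refine ⟨a, ha, N, haN, ?_⟩
    convert ha' using 1
    exact (Function.eq_update_iff.2 ⟨by simp [haN], hoff⟩).symm
  · refine ⟨Pi.single N 1 + a, ha', N, by rw [Pi.add_apply, Pi.single_eq_same, haN]; rfl, ?_⟩
    convert ha using 1
    exact (Function.eq_update_iff.2 ⟨haN, fun i hi => (hoff i hi).symm⟩).symm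

section CantorSum

variable {X : Type*} [AddCommMonoid X]

def cantorPartialSum (x : ℕ → X) (n : ℕ) (ε : ℕ → ZMod 2) : X :=
  ∑ i ∈ Finset.range n, if ε i = 1 then x i else 0

theorem cantorPartialSum_succ (x : ℕ → X) (n : ℕ) (ε : ℕ → ZMod 2) :
    cantorPartialSum x (n + 1) ε = cantorPartialSum x n ε + if ε n = 1 then x n else 0 :=
  Finset.sum_range_succ _ n

theorem cantorPartialSum_update_one (x : ℕ → X) {ε : ℕ → ZMod 2} {N n : ℕ} (hε : ε N = 0)
    (hN : N < n) :
    cantorPartialSum x n (Function.update ε N 1) = cantorPartialSum x n ε + x N := by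
  have hNn : N ∈ Finset.range n := Finset.mem_range.2 hN
  unfold cantorPartialSum
  rw [← Finset.add_sum_erase _ _ hNn, ← Finset.add_sum_erase _ _ hNn, add_comm,
    Finset.sum_congr rfl fun i hi => by rw [Function.update_of_ne (Finset.ne_of_mem_erase hi)]]
  simp [hε]

theorem continuous_cantorPartialSum [TopologicalSpace X] [ContinuousAdd X] (x : ℕ → X)
    (n : ℕ) : Continuous (cantorPartialSum x n) :=
  continuous_finsetSum _ fun i _ =>
    (continuous_of_discreteTopology (f := fun z : ZMod 2 => if z = 1 then x i else 0)).comp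
      (continuous_apply i)

/- The metric need not be translation invariant, so `xₙ` has to be small relative to each of the
finitely many partial sums of the earlier terms; this is what makes every `∑ εₙ xₙ` converge. -/
theorem exists_seq_notMem_dist_cantorPartialSum_lt [PseudoMetricSpace X] [ContinuousAdd X]
    {s : Set X} (hs : s ∉ 𝓝 0) : ∃ x : ℕ → X, (∀ n, x n ∉ s) ∧
      ∀ n ε, dist (cantorPartialSum x n ε + x n) (cantorPartialSum x n ε) < (1 / 2) ^ n := by
  have hsmall : ∀ n (v : Fin n → X), ∀ᶠ y in 𝓝 0, ∀ δ : Fin n → ZMod 2,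
      dist ((∑ i, if δ i = 1 then v i else 0) + y) (∑ i, if δ i = 1 then v i else 0)
        < (1 / 2) ^ n := fun n v =>
    eventually_all.2 fun _ => ((continuous_const_add _).tendsto' 0 _ (add_zero _)).eventually
      (Metric.ball_mem_nhds _ (by positivity))
  obtain ⟨x, hx⟩ := exists_seq_forall_mem_of_nonempty _ fun n v =>
    ((not_eventually.1 hs).and_eventually (hsmall n v)).exists
  refine ⟨x, fun n => (hx n).1, fun n ε => ?_⟩
  simpa only [cantorPartialSum, Fin.sum_univ_eq_sum_range (fun i => if ε i = 1 then x i else 0)]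
    using (hx n).2 fun i => ε i

theorem exists_continuous_tendsto_cantorPartialSum [PseudoMetricSpace X] [CompleteSpace X]
    [ContinuousAdd X] (x : ℕ → X)
    (hx : ∀ n ε, dist (cantorPartialSum x n ε + x n) (cantorPartialSum x n ε) < (1 / 2) ^ n) :
    ∃ S : C(ℕ → ZMod 2, X), ∀ ε, Tendsto (cantorPartialSum x · ε) atTop (𝓝 (S ε)) := by
  refine ContinuousMap.exists_tendsto_of_dist_succ_le_geometric
    (fun n => ⟨cantorPartialSum x n, continuous_cantorPartialSum x n⟩) fun n ε => ?_
  simp only [ContinuousMap.coe_mk, cantorPartialSum_succ]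
  split_ifs
  · exact (dist_comm _ _).trans_le (hx n ε).le
  · simp

theorem eq_add_of_tendsto_cantorPartialSum [TopologicalSpace X] [T2Space X] [ContinuousAdd X]
    {x : ℕ → X} {S : (ℕ → ZMod 2) → X}
    (hS : ∀ ε, Tendsto (cantorPartialSum x · ε) atTop (𝓝 (S ε))) {ε : ℕ → ZMod 2} {N : ℕ}
    (hε : ε N = 0) : S (Function.update ε N 1) = S ε + x N :=
  tendsto_nhds_unique (hS _) <| ((hS ε).add_const (x N)).congr' <|
    (eventually_gt_atTop N).mono fun _ hn => (cantorPartialSum_update_one x hε hn).symm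

end CantorSum

/-- Christensen's theorem: if `A` is a universally measurable non-Haar-null subset of an
Abelian Polish group, then `A - A` is a neighborhood of zero. -/
theorem statement13 {X : Type*} [TopologicalSpace X] [AddCommGroup X] [IsTopologicalAddGroup X]
    [PolishSpace X] [MeasurableSpace X] [BorelSpace X]
    (A : Set X) (hA : UniversallyMeasurable A) (hAn : ¬ IsHaarNull A) :
    A - A ∈ 𝓝 (0 : X) := by
  by_contra hAA
  let := TopologicalSpace.upgradeIsCompletelyMetrizable X
  obtain ⟨x, hxA, hx⟩ := exists_seq_notMem_dist_cantorPartialSum_lt hAA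
  obtain ⟨S, hS⟩ := exists_continuous_tendsto_cantorPartialSum x hx
  let ν : Measure (ℕ → ZMod 2) := Measure.addHaarMeasure ⊤
  have : IsProbabilityMeasure ν := ⟨Measure.addHaarMeasure_self⟩
  have := Measure.isProbabilityMeasure_map (μ := ν) S.continuous.aemeasurable
  refine hAn ⟨ν.map S, inferInstance, fun t => by_contra fun ht => ?_⟩
  have hAt : UniversallyMeasurable {y | y - t ∈ A} := hA.preimage (measurable_sub_const t)
  rw [Measure.map_apply₀ S.continuous.aemeasurable (hAt _ inferInstance)] at ht
  obtain ⟨ε, hε, N, hεN, hε'⟩ :=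
    exists_mem_update_one_mem ν (hAt.preimage S.continuous.measurable ν inferInstance) ht
  exact hxA N ⟨_, hε', _, hε, by
    simp [eq_add_of_tendsto_cantorPartialSum hS hεN]⟩
end

section
/- Every Haar-open universally measurable subset A of an uncountable Abelian Polish group X is not Haar-null. -/
open MeasureTheory Topology

theorem IsHaarOpen.exists_finset_subset_biUnion_translates {X : Type*} [TopologicalSpace X]
    [AddCommGroup X] {A : Set X} (hA : IsHaarOpen A) {K : Set X} (hK : IsCompact K) :
    ∃ s : Finset X, K ⊆ ⋃ y ∈ s, {z | z - y ∈ A} := by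
  classical
  choose! y hy using hA K hK
  obtain ⟨t, -, hKt⟩ := hK.elim_nhdsWithin_subcover _ hy
  refine ⟨t.image y, fun z hz => ?_⟩
  obtain ⟨p, hpt, -, hzp⟩ := Set.mem_iUnion₂.1 (hKt hz)
  exact Set.mem_biUnion (Finset.mem_image_of_mem y hpt) hzp

theorem statement18_general {X : Type*} [TopologicalSpace X] [AddCommGroup X]
    [PolishSpace X] [MeasurableSpace X] [BorelSpace X]
    (A : Set X) (hopen : IsHaarOpen A) :
    ¬ IsHaarNull A := by
  rintro ⟨μ, _, hnull⟩
  -- finite Borel measures on Polish spaces are inner regular with respect to compact sets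
  obtain ⟨K, -, hK, hμK⟩ := MeasurableSet.univ.exists_lt_isCompact (μ := μ) (r := 0) (by simp)
  obtain ⟨s, hKs⟩ := hopen.exists_finset_subset_biUnion_translates hK
  have hs_null : μ (⋃ y ∈ s, {z | z - y ∈ A}) = 0 :=
    (measure_biUnion_null_iff s.countable_toSet).2 fun y _ => hnull y
  exact hμK.ne' (measure_mono_null hKs hs_null)

/-- In an uncountable Abelian Polish group, every Haar-open universally measurable set is not
Haar-null. -/
theorem statement18 {X : Type*} [TopologicalSpace X] [AddCommGroup X] [IsTopologicalAddGroup X]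
    [PolishSpace X] [MeasurableSpace X] [BorelSpace X] [Uncountable X]
    (A : Set X) (hA : UniversallyMeasurable A) (hopen : IsHaarOpen A) :
    ¬ IsHaarNull A :=
  statement18_general A hopen
end
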